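/- arXiv:1707.09789 — 2 statements merged into one kernel-verified Lean document; each statement's English description precedes it below -/
import Mathlib

section
/- If s = f₁f₂⋯f_z is the greedy nonclassical LZ77 parsing of a string s, then the strings f_i · f_{i+1}[1] for i ∈ [1..z−1] (each phrase extended by the first letter of the next phrase) are pairwise distinct. -/
/-- Starting (0-indexed) position of the `i`-th phrase of a parsing. -/
def startPos {α : Type*} (ps : List (List α)) (i : ℕ) : ℕ :=
  ((ps.take i).flatten).length

/-- A nonclassical LZ77 parsing of `s`: phrases are nonempty, concatenate to
`s`, and each phrase is either a single letter or has an occurrence in `s`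
starting strictly before the phrase's start. -/
def IsNonclassicalLZ77Parsing {α : Type*} (s : List α) (ps : List (List α)) : Prop :=
  ps.flatten = s ∧ (∀ p ∈ ps, p ≠ []) ∧
  ∀ i : Fin ps.length, (ps.get i).length = 1 ∨
    ∃ j < startPos ps i, ps.get i <+: s.drop j

/-- A greedy nonclassical LZ77 parsing: each phrase is as long as possible. -/
def IsGreedyNonclassicalLZ77Parsing {α : Type*} (s : List α) (ps : List (List α)) : Prop :=
  IsNonclassicalLZ77Parsing s ps ∧
  ∀ i : Fin ps.length, ∀ L : ℕ, (ps.get i).length < L →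
    startPos ps i + L ≤ s.length →
    ¬ (1 < L ∧ ∃ j < startPos ps i, (s.drop (startPos ps i)).take L <+: s.drop j)

/-!
If `fᵢ · fᵢ₊₁[1] = fⱼ · fⱼ₊₁[1]` with `i < j`, then the string `fⱼ · fⱼ₊₁[1]`, which starts at the
start of `fⱼ`, also occurs at the earlier start of `fᵢ`. It is longer than `fⱼ` and has at least two
letters, so the greedy parser would have taken it as the phrase instead of `fⱼ`.
-/

section StartPos

open List

variable {α : Type*}

theorem startPos_le_startPos (ps : List (List α)) {i j : ℕ} (hij : i ≤ j) :
    startPos ps i ≤ startPos ps j :=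
  ((take_prefix_take_left hij).flatten).length_le

theorem startPos_succ (ps : List (List α)) {i : ℕ} (hi : i < ps.length) :
    startPos ps (i + 1) = startPos ps i + ps[i].length := by
  rw [startPos, startPos, take_add_one, getElem?_eq_getElem hi, Option.toList_some,
    flatten_append, length_append, flatten_singleton]

theorem startPos_lt_startPos (ps : List (List α)) (hne : ∀ p ∈ ps, p ≠ [])
    {i j : ℕ} (hij : i < j) (hj : j ≤ ps.length) : startPos ps i < startPos ps j := by
  have hi : i < ps.length := by omega
  have hpos : 0 < ps[i].length := length_pos_iff.mpr (hne _ (getElem_mem hi))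
  calc startPos ps i < startPos ps (i + 1) := by rw [startPos_succ ps hi]; omega
    _ ≤ startPos ps j := startPos_le_startPos ps hij

theorem drop_startPos_flatten (ps : List (List α)) (i : ℕ) :
    ps.flatten.drop (startPos ps i) = (ps.drop i).flatten := by
  have hsplit : ps.flatten = (ps.take i).flatten ++ (ps.drop i).flatten := by
    rw [← flatten_append, take_append_drop]
  rw [startPos, hsplit, drop_left]

theorem getElem_append_take_one_prefix_drop_startPos (ps : List (List α)) {i : ℕ}
    (hi : i + 1 < ps.length) :
    ps[i] ++ ps[i + 1].take 1 <+: ps.flatten.drop (startPos ps i) := by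
  rw [drop_startPos_flatten, drop_eq_getElem_cons (by omega : i < ps.length),
    drop_eq_getElem_cons hi, flatten_cons, flatten_cons]
  exact prefix_append_right_inj _ |>.mpr ((take_prefix 1 _).trans (prefix_append _ _))

end StartPos

namespace IsGreedyNonclassicalLZ77Parsing

open List

variable {α : Type*} {s : List α} {ps : List (List α)}

theorem not_prefix_drop_of_lt_startPos (h : IsGreedyNonclassicalLZ77Parsing s ps)
    (i : Fin ps.length) {w : List α} (hw : w <+: s.drop (startPos ps i))
    (hlong : (ps.get i).length < w.length) (htwo : 1 < w.length)
    {k : ℕ} (hk : k < startPos ps i) : ¬ w <+: s.drop k := by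
  have hfit : startPos ps i + w.length ≤ s.length := by
    have := hw.length_le
    rw [length_drop] at this
    omega
  have hw_take : (s.drop (startPos ps i)).take w.length = w := (prefix_iff_eq_take.mp hw).symm
  intro hearlier
  exact h.2 i w.length hlong hfit ⟨htwo, k, hk, by rwa [hw_take]⟩

theorem getElem_append_take_one_ne_of_lt (h : IsGreedyNonclassicalLZ77Parsing s ps) {i j : ℕ}
    (hi : i + 1 < ps.length) (hj : j + 1 < ps.length) (hij : i < j) :
    ps[i] ++ ps[i + 1].take 1 ≠ ps[j] ++ ps[j + 1].take 1 := by
  obtain rfl : ps.flatten = s := h.1.1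
  have hne := h.1.2.1
  intro heq
  have hnonempty : ∀ k (hk : k < ps.length), 0 < ps[k].length := fun k hk =>
    length_pos_iff.mpr (hne _ (getElem_mem hk))
  have hlen : (ps[j] ++ ps[j + 1].take 1).length = ps[j].length + 1 := by
    simp only [length_append, length_take]
    have := hnonempty (j + 1) hj
    omega
  have hearlier := getElem_append_take_one_prefix_drop_startPos ps hi
  rw [heq] at hearlier
  refine h.not_prefix_drop_of_lt_startPos ⟨j, by omega⟩
    (getElem_append_take_one_prefix_drop_startPos ps hj) ?_ ?_
    (startPos_lt_startPos ps hne hij (by omega)) hearlier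
  · simp only [get_eq_getElem, hlen]; omega
  · have := hnonempty j (by omega)
    omega

end IsGreedyNonclassicalLZ77Parsing

/-- In a greedy nonclassical LZ77 parsing `f₁⋯f_z`, the strings
`fᵢ · fᵢ₊₁[1]` (each phrase extended by the first letter of the next phrase),
for `i ∈ [1..z-1]`, are pairwise distinct. -/
theorem greedy_nonclassical_extended_phrases_distinct {α : Type*}
    (s : List α) (ps : List (List α))
    (h : IsGreedyNonclassicalLZ77Parsing s ps) :
    ∀ i j : Fin ps.length, ∀ (hi : (i : ℕ) + 1 < ps.length) (hj : (j : ℕ) + 1 < ps.length),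
      i ≠ j →
      ps.get i ++ (ps.get ⟨(i : ℕ) + 1, hi⟩).take 1 ≠
        ps.get j ++ (ps.get ⟨(j : ℕ) + 1, hj⟩).take 1 := by
  intro i j hi hj hij
  rcases Fin.lt_or_lt_of_ne hij with hlt | hlt
  · exact h.getElem_append_take_one_ne_of_lt hi hj hlt
  · exact (h.getElem_append_take_one_ne_of_lt hj hi hlt).symm
end

section
/- Any phrase of an arbitrary LZ77 parsing of a string s overlaps with at most two phrases of the greedy LZ77 parsing of s. -/
/-- An LZ77 parsing of `s`: phrases are nonempty, concatenate to `s`, and every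
phrase is either a single letter, or its prefix missing the last letter occurs
in `s` starting strictly before the phrase's start. -/
def IsLZ77Parsing {α : Type*} (s : List α) (ps : List (List α)) : Prop :=
  ps.flatten = s ∧ (∀ p ∈ ps, p ≠ []) ∧
  ∀ i : Fin ps.length, (ps.get i).length = 1 ∨
    (1 < (ps.get i).length ∧
      ∃ j < startPos ps i, (ps.get i).dropLast <+: s.drop j)

/-- A greedy LZ77 parsing: an LZ77 parsing in which every phrase is as long as
possible, i.e. no strictly longer phrase fitting in `s` would be admissible. -/
def IsGreedyLZ77Parsing {α : Type*} (s : List α) (ps : List (List α)) : Prop :=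
  IsLZ77Parsing s ps ∧
  ∀ i : Fin ps.length, ∀ L : ℕ, (ps.get i).length < L →
    startPos ps i + L ≤ s.length →
    ¬ ∃ j < startPos ps i, (s.drop (startPos ps i)).take (L - 1) <+: s.drop j

theorem Finset.card_le_two_of_forall_not_lt_lt {ι : Type*} [LinearOrder ι] (S : Finset ι)
    (h : ∀ x ∈ S, ∀ y ∈ S, ∀ z ∈ S, x < y → y < z → False) : S.card ≤ 2 := by
  rcases S.eq_empty_or_nonempty with rfl | hS
  · simp
  have hsub : S ⊆ {S.min' hS, S.max' hS} := by
    intro y hy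
    by_contra hne
    simp only [Finset.mem_insert, Finset.mem_singleton, not_or] at hne
    exact h _ (S.min'_mem hS) y hy _ (S.max'_mem hS)
      (lt_of_le_of_ne (S.min'_le y hy) (Ne.symm hne.1))
      (lt_of_le_of_ne (S.le_max' y hy) hne.2)
  exact (Finset.card_le_card hsub).trans Finset.card_le_two

theorem List.take_drop_prefix_drop_shift {α : Type*} {s : List α} {a c k n ℓ : ℕ}
    (h : (s.drop a).take n <+: s.drop k) (hac : a ≤ c) (hcℓ : c + ℓ ≤ a + n) :
    (s.drop c).take ℓ <+: s.drop (k + (c - a)) := by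
  have hshift := h.drop (c - a)
  rw [List.drop_take, List.drop_drop, List.drop_drop, Nat.add_sub_cancel' hac] at hshift
  exact (List.take_prefix_take_left (by omega)).trans hshift

section startPos

variable {α : Type*} (ps : List (List α))

theorem startPos_mono {m n : ℕ} (h : m ≤ n) : startPos ps m ≤ startPos ps n := by
  obtain ⟨t, ht⟩ : ps.take m <+: ps.take n := List.take_prefix_take_left h
  unfold startPos
  rw [← ht, List.flatten_append, List.length_append]
  omega

theorem startPos_succ_s9 (j : Fin ps.length) :
    startPos ps (j + 1) = startPos ps j + (ps.get j).length := by
  unfold startPos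
  rw [List.take_add_one, List.flatten_append, List.length_append]
  simp

theorem startPos_length : startPos ps ps.length = ps.flatten.length := by
  rw [startPos, List.take_length]

theorem startPos_add_length_le (j : Fin ps.length) {n : ℕ} (h : (j : ℕ) < n) :
    startPos ps j + (ps.get j).length ≤ startPos ps n :=
  startPos_succ_s9 ps j ▸ startPos_mono ps h

theorem startPos_add_length_le_length_flatten (j : Fin ps.length) :
    startPos ps j + (ps.get j).length ≤ ps.flatten.length :=
  startPos_length ps ▸ startPos_add_length_le ps j j.isLt

theorem drop_startPos (j : ℕ) : ps.flatten.drop (startPos ps j) = (ps.drop j).flatten := by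
  have hsplit : ps.flatten = (ps.take j).flatten ++ (ps.drop j).flatten := by
    rw [← List.flatten_append, List.take_append_drop]
  rw [hsplit, startPos, List.drop_left]

theorem get_eq_take_drop_startPos (j : Fin ps.length) :
    ps.get j = (ps.flatten.drop (startPos ps j)).take (ps.get j).length := by
  refine List.prefix_iff_eq_take.mp ⟨(ps.drop (j + 1)).flatten, ?_⟩
  rw [drop_startPos, ← List.flatten_cons, List.get_eq_getElem,
    ← List.drop_eq_getElem_cons j.isLt]

end startPos

section Parsing

variable {α : Type*} {s : List α} {ps qs : List (List α)}

theorem IsLZ77Parsing.exists_copy (hqs : IsLZ77Parsing s qs) (i : Fin qs.length)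
    (hi : 1 < (qs.get i).length) :
    ∃ k < startPos qs i, (s.drop (startPos qs i)).take ((qs.get i).length - 1) <+: s.drop k := by
  obtain ⟨hflat, -, hcopy⟩ := hqs
  rcases hcopy i with hone | ⟨-, k, hk, hpre⟩
  · omega
  have hprefix : (qs.get i).dropLast = (s.drop (startPos qs i)).take ((qs.get i).length - 1) := by
    rw [List.dropLast_eq_take]
    nth_rw 2 [get_eq_take_drop_startPos qs i]
    rw [List.take_take, min_eq_left (Nat.sub_le _ _), hflat]
  exact ⟨k, hk, hprefix ▸ hpre⟩

theorem IsGreedyLZ77Parsing.not_take_prefix_drop (hps : IsGreedyLZ77Parsing s ps)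
    (j : Fin ps.length) {k : ℕ} (hk : k < startPos ps j)
    (hlen : startPos ps j + (ps.get j).length < s.length) :
    ¬ (s.drop (startPos ps j)).take (ps.get j).length <+: s.drop k :=
  fun hcopy => hps.2 j _ (Nat.lt_succ_self _) hlen ⟨k, hk, hcopy⟩

theorem IsGreedyLZ77Parsing.not_strictly_inside (hps : IsGreedyLZ77Parsing s ps)
    (hqs : IsLZ77Parsing s qs) (i : Fin qs.length) (j : Fin ps.length) :
    ¬ (startPos qs i < startPos ps j ∧
      startPos ps j + (ps.get j).length < startPos qs i + (qs.get i).length) := by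
  rintro ⟨hstart, hend⟩
  have hj : 0 < (ps.get j).length :=
    List.length_pos_iff.mpr (hps.1.2.1 _ (List.get_mem ps j))
  have hi : startPos qs i + (qs.get i).length ≤ s.length :=
    hqs.1 ▸ startPos_add_length_le_length_flatten qs i
  obtain ⟨k, hk, hcopy⟩ := hqs.exists_copy i (by omega)
  exact hps.not_take_prefix_drop j (k := k + (startPos ps j - startPos qs i)) (by omega)
    (by omega) (List.take_drop_prefix_drop_shift hcopy hstart.le (by omega))

end Parsing

/-- Any phrase of an arbitrary LZ77 parsing overlaps with at most two phrases
of the greedy LZ77 parsing of the same string. -/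
theorem phrase_overlaps_at_most_two {α : Type*} (s : List α)
    (ps qs : List (List α))
    (hps : IsGreedyLZ77Parsing s ps) (hqs : IsLZ77Parsing s qs) :
    ∀ i : Fin qs.length,
      (Finset.univ.filter (fun j : Fin ps.length =>
        startPos qs i < startPos ps j + (ps.get j).length ∧
        startPos ps j < startPos qs i + (qs.get i).length)).card ≤ 2 := by
  intro i
  refine Finset.card_le_two_of_forall_not_lt_lt _ fun x hx y _ z hz hxy hyz => ?_
  simp only [Finset.mem_filter, Finset.mem_univ, true_and] at hx hz
  have hxy' := startPos_add_length_le ps x hxy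
  have hyz' := startPos_add_length_le ps y hyz
  exact hps.not_strictly_inside hqs i y ⟨by omega, by omega⟩
end
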